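/- Let B ∈ ℝ^{p×p}, let F_1,…,F_p ∈ ℝ^{p×p} be symmetric positive semidefinite, let f_1,…,f_p > 0, and define Σ(z) = diag((f_1 + zᵀF_1 z)^{1/2}, …, (f_p + zᵀF_p z)^{1/2}). Let η be a mean-zero random vector in ℝ^p with σ² := E‖η‖₂² < ∞, and set λ := ‖B‖₂² + σ²·max_{1≤j≤p} λ_max(F_j) and K := 1 − λ + σ²·max_{1≤j≤p} f_j. Then for every z ∈ ℝ^p, the drift function V(z) = 1 + ‖z‖₂² satisfies E[V(Bᵀz + Σ(z)η)] ≤ λ·V(z) + K. Consequently, if λ < 1, then E[V(Bᵀz + Σ(z)η)] ≤ ((1 + λ)/2)·V(z) for every z with V(z) ≥ 2K/(1 − λ). -/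

import Mathlib

/-!
Write `a = Bᵀz` and `ξ = Σ(z)η`. Since `η` has mean zero, so does `ξ`, and the cross term in
`‖a + ξ‖²` integrates to zero: `E‖a + ξ‖² = ‖a‖² + E‖ξ‖²`. The first term is at most `‖B‖₂²‖z‖²`.
For the second, `Σ(z)` is diagonal with squared entries `f_j + zᵀF_jz ≤ max f + max λ_max(F) ‖z‖²`
(Rayleigh), so `E‖ξ‖² ≤ (max f + max λ_max(F) ‖z‖²) σ²`. Adding these up gives exactly
`λV(z) + K`, and the second claim is arithmetic.
-/

open MeasureTheory
open scoped RealInnerProductSpace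

/-- The diagonal ARCH conditional standard deviation
`Σ(z) = diag((f₁ + zᵀF₁z)^{1/2}, …, (f_p + zᵀF_pz)^{1/2})`. -/
noncomputable def archSigma {p : ℕ} (f : Fin p → ℝ) (F : Fin p → Matrix (Fin p) (Fin p) ℝ)
    (z : EuclideanSpace ℝ (Fin p)) : Matrix (Fin p) (Fin p) ℝ :=
  Matrix.diagonal fun j => Real.sqrt (f j + ⟪Matrix.toEuclideanLin (F j) z, z⟫)

section Matrix

variable {n : Type*} [Fintype n] [DecidableEq n]

open scoped MatrixOrder in
theorem Matrix.IsHermitian.inner_toEuclideanLin_self_le {A : Matrix n n ℝ} (hA : A.IsHermitian)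
    {c : ℝ} (hc : ∀ i, hA.eigenvalues i ≤ c) (z : EuclideanSpace ℝ n) :
    ⟪Matrix.toEuclideanLin A z, z⟫ ≤ c * ‖z‖ ^ 2 := by
  have hle : A ≤ algebraMap ℝ _ c := by
    refine le_algebraMap_of_spectrum_le ?_ hA.isSelfAdjoint
    rw [hA.spectrum_real_eq_range_eigenvalues]
    rintro _ ⟨i, rfl⟩
    exact hc i
  have := (Matrix.isPositive_toEuclideanLin_iff.mpr (Matrix.le_iff.mp hle)).inner_nonneg_left z
  simpa [inner_sub_left, real_inner_smul_left, Algebra.algebraMap_eq_smul_one] using this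

theorem Matrix.norm_toEuclideanCLM_diagonal_apply_sq_le {d : n → ℝ} {c : ℝ}
    (hd : ∀ j, d j ^ 2 ≤ c) (x : EuclideanSpace ℝ n) :
    ‖Matrix.toEuclideanCLM (𝕜 := ℝ) (Matrix.diagonal d) x‖ ^ 2 ≤ c * ‖x‖ ^ 2 := by
  simp only [EuclideanSpace.norm_sq_eq, Finset.mul_sum]
  refine Finset.sum_le_sum fun j _ => ?_
  simpa [Matrix.mulVec_diagonal, mul_pow] using mul_le_mul_of_nonneg_right (hd j) (sq_nonneg (x j))

open scoped Matrix.Norms.L2Operator in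
theorem Matrix.norm_toEuclideanCLM_transpose (B : Matrix n n ℝ) :
    ‖Matrix.toEuclideanCLM (𝕜 := ℝ) B.transpose‖ = ‖Matrix.toEuclideanCLM (𝕜 := ℝ) B‖ :=
  Matrix.l2_opNorm_conjTranspose B

end Matrix

section MeanZero

variable {Ω E F : Type*} [MeasurableSpace Ω] {μ : Measure Ω} [IsProbabilityMeasure μ]
  [NormedAddCommGroup E] [InnerProductSpace ℝ E]
  [NormedAddCommGroup F] [InnerProductSpace ℝ F] [CompleteSpace F]

theorem integral_norm_add_sq_of_integral_eq_zero {ξ : Ω → F} (hξ : MemLp ξ 2 μ)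
    (hmean : ∫ ω, ξ ω ∂μ = 0) (a : F) :
    ∫ ω, ‖a + ξ ω‖ ^ 2 ∂μ = ‖a‖ ^ 2 + ∫ ω, ‖ξ ω‖ ^ 2 ∂μ := by
  have hcross : Integrable (fun ω => 2 * ⟪a, ξ ω⟫) μ :=
    ((innerSL ℝ a).integrable_comp (hξ.integrable one_le_two)).const_mul 2
  have hconst_cross : Integrable (fun ω => ‖a‖ ^ 2 + 2 * ⟪a, ξ ω⟫) μ :=
    (integrable_const _).add hcross
  simp_rw [norm_add_sq_real]
  rw [integral_add hconst_cross (hξ.integrable_norm_pow two_ne_zero),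
    integral_add (integrable_const _) hcross, integral_const_mul,
    integral_inner (hξ.integrable one_le_two), hmean]
  simp

theorem integral_one_add_norm_add_clm_sq_le [CompleteSpace E] {η : Ω → E} (hη : MemLp η 2 μ)
    (hmean : ∫ ω, η ω ∂μ = 0) (a : F) (C : E →L[ℝ] F) {c : ℝ}
    (hC : ∀ x, ‖C x‖ ^ 2 ≤ c * ‖x‖ ^ 2) :
    ∫ ω, (1 + ‖a + C (η ω)‖ ^ 2) ∂μ ≤ 1 + ‖a‖ ^ 2 + c * ∫ ω, ‖η ω‖ ^ 2 ∂μ := by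
  have hCη : MemLp (fun ω => C (η ω)) 2 μ := C.comp_memLp' hη
  have hCη_mean : ∫ ω, C (η ω) ∂μ = 0 := by
    rw [C.integral_comp_comm (hη.integrable one_le_two), hmean, map_zero]
  have hCη_sq_le : ∫ ω, ‖C (η ω)‖ ^ 2 ∂μ ≤ c * ∫ ω, ‖η ω‖ ^ 2 ∂μ := by
    rw [← integral_const_mul]
    exact integral_mono (hCη.integrable_norm_pow two_ne_zero)
      ((hη.integrable_norm_pow two_ne_zero).const_mul c) fun ω => hC (η ω)
  have hsum_sq : Integrable (fun ω => ‖a + C (η ω)‖ ^ 2) μ :=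
    ((memLp_const a).add hCη).integrable_norm_pow two_ne_zero
  rw [integral_add (integrable_const 1) hsum_sq,
    integral_norm_add_sq_of_integral_eq_zero hCη hCη_mean]
  simp only [integral_const, probReal_univ, smul_eq_mul, one_mul]
  linarith

end MeanZero

theorem archSigma_apply_norm_sq_le {p : ℕ} {F : Fin p → Matrix (Fin p) (Fin p) ℝ}
    (hF : ∀ j, (F j).PosSemidef) {f : Fin p → ℝ} (hf : ∀ j, 0 ≤ f j) {lmax : Fin p → ℝ}
    (hlmax : ∀ j i, (hF j).1.eigenvalues i ≤ lmax j) (z x : EuclideanSpace ℝ (Fin p)) :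
    ‖Matrix.toEuclideanCLM (𝕜 := ℝ) (archSigma f F z) x‖ ^ 2 ≤
      ((⨆ j, f j) + (⨆ j, lmax j) * ‖z‖ ^ 2) * ‖x‖ ^ 2 := by
  refine Matrix.norm_toEuclideanCLM_diagonal_apply_sq_le (fun j => ?_) x
  have hquad_nonneg := (Matrix.isPositive_toEuclideanLin_iff.mpr (hF j)).inner_nonneg_left z
  have hquad_le := (hF j).1.inner_toEuclideanLin_self_le (hlmax j) z
  have hf_le : f j ≤ ⨆ j, f j := le_ciSup (Finite.bddAbove_range f) j
  have hlmax_le : lmax j * ‖z‖ ^ 2 ≤ (⨆ j, lmax j) * ‖z‖ ^ 2 :=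
    mul_le_mul_of_nonneg_right (le_ciSup (Finite.bddAbove_range lmax) j) (sq_nonneg _)
  rw [Real.sq_sqrt (add_nonneg (hf j) hquad_nonneg)]
  linarith

theorem integral_one_add_norm_arch_sq_le {Ω : Type*} [MeasurableSpace Ω] {μ : Measure Ω}
    [IsProbabilityMeasure μ] {p : ℕ} {F : Fin p → Matrix (Fin p) (Fin p) ℝ}
    (hF : ∀ j, (F j).PosSemidef) {f : Fin p → ℝ} (hf : ∀ j, 0 ≤ f j) {lmax : Fin p → ℝ}
    (hlmax : ∀ j i, (hF j).1.eigenvalues i ≤ lmax j) {η : Ω → EuclideanSpace ℝ (Fin p)}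
    (hη : MemLp η 2 μ) (hmean : ∫ ω, η ω ∂μ = 0) (B : Matrix (Fin p) (Fin p) ℝ)
    (z : EuclideanSpace ℝ (Fin p)) :
    ∫ ω, (1 + ‖Matrix.toEuclideanCLM (𝕜 := ℝ) B.transpose z +
        Matrix.toEuclideanCLM (𝕜 := ℝ) (archSigma f F z) (η ω)‖ ^ 2) ∂μ ≤
      1 + ‖Matrix.toEuclideanCLM (𝕜 := ℝ) B‖ ^ 2 * ‖z‖ ^ 2 +
        ((⨆ j, f j) + (⨆ j, lmax j) * ‖z‖ ^ 2) * ∫ ω, ‖η ω‖ ^ 2 ∂μ := by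
  have hBz : ‖Matrix.toEuclideanCLM (𝕜 := ℝ) B.transpose z‖ ^ 2 ≤
      ‖Matrix.toEuclideanCLM (𝕜 := ℝ) B‖ ^ 2 * ‖z‖ ^ 2 := by
    rw [← mul_pow, ← Matrix.norm_toEuclideanCLM_transpose]
    gcongr
    exact ContinuousLinearMap.le_opNorm _ _
  refine (integral_one_add_norm_add_clm_sq_le hη hmean _ _
    (archSigma_apply_norm_sq_le hF hf hlmax z)).trans ?_
  linarith

theorem le_one_add_div_two_mul_of_le_mul_add {x v l k : ℝ} (hx : x ≤ l * v + k) (hl : l < 1)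
    (hv : 2 * k / (1 - l) ≤ v) : x ≤ (1 + l) / 2 * v := by
  have := (div_le_iff₀ (sub_pos.mpr hl)).mp hv
  linarith

theorem arch_var_drift_general {Ω : Type*} [MeasurableSpace Ω] {p : ℕ}
    (μ : Measure Ω) [IsProbabilityMeasure μ]
    (B : Matrix (Fin p) (Fin p) ℝ)
    (F : Fin p → Matrix (Fin p) (Fin p) ℝ) (hF_psd : ∀ j, (F j).PosSemidef)
    (f : Fin p → ℝ) (hf : ∀ j, 0 < f j)
    (η : Ω → EuclideanSpace ℝ (Fin p)) (hη_meas : Measurable η)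
    (hη_sq_int : Integrable (fun ω => ‖η ω‖ ^ 2) μ)
    (hη_mean : (∫ ω, η ω ∂μ) = 0)
    (σ2 : ℝ) (hσ2 : σ2 = ∫ ω, ‖η ω‖ ^ 2 ∂μ)
    -- `lmax j` is the largest eigenvalue of `F j`
    (lmax : Fin p → ℝ) (hlmax : ∀ j, IsGreatest (Set.range (hF_psd j).1.eigenvalues) (lmax j))
    (lam K : ℝ)
    (hlam : lam = ‖Matrix.toEuclideanCLM (𝕜 := ℝ) B‖ ^ 2 + σ2 * (⨆ j, lmax j))
    (hK : K = 1 - lam + σ2 * (⨆ j, f j)) :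
    (∀ z : EuclideanSpace ℝ (Fin p),
      (∫ ω, (1 + ‖Matrix.toEuclideanCLM (𝕜 := ℝ) B.transpose z +
          Matrix.toEuclideanCLM (𝕜 := ℝ) (archSigma f F z) (η ω)‖ ^ 2) ∂μ) ≤
        lam * (1 + ‖z‖ ^ 2) + K) ∧
    (lam < 1 → ∀ z : EuclideanSpace ℝ (Fin p), 2 * K / (1 - lam) ≤ 1 + ‖z‖ ^ 2 →
      (∫ ω, (1 + ‖Matrix.toEuclideanCLM (𝕜 := ℝ) B.transpose z +
          Matrix.toEuclideanCLM (𝕜 := ℝ) (archSigma f F z) (η ω)‖ ^ 2) ∂μ) ≤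
        ((1 + lam) / 2) * (1 + ‖z‖ ^ 2)) := by
  have hη : MemLp η 2 μ :=
    (memLp_two_iff_integrable_sq_norm hη_meas.aestronglyMeasurable).mpr hη_sq_int
  have hdrift (z : EuclideanSpace ℝ (Fin p)) :=
    (integral_one_add_norm_arch_sq_le hF_psd (fun j => (hf j).le)
      (fun j i => (hlmax j).2 (Set.mem_range_self i)) hη hη_mean B z).trans_eq
      (show _ = lam * (1 + ‖z‖ ^ 2) + K by rw [hK, hlam, hσ2]; ring)
  exact ⟨hdrift, fun hlam_lt z hz => le_one_add_div_two_mul_of_le_mul_add (hdrift z) hlam_lt hz⟩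

/-- **Drift condition for the ARCH-type vector autoregression.**
With `V(z) = 1 + ‖z‖₂²`, `λ = ‖B‖₂² + σ²·max_j λ_max(F_j)` and `K = 1 - λ + σ²·max_j f_j`,
we have `E[V(Bᵀz + Σ(z)η)] ≤ λV(z) + K` for all `z`; if moreover `λ < 1` then
`E[V(Bᵀz + Σ(z)η)] ≤ ((1+λ)/2)·V(z)` whenever `V(z) ≥ 2K/(1-λ)`. -/
theorem arch_var_drift {Ω : Type*} [MeasurableSpace Ω] {p : ℕ} (hp : 0 < p)
    (μ : Measure Ω) [IsProbabilityMeasure μ]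
    (B : Matrix (Fin p) (Fin p) ℝ)
    (F : Fin p → Matrix (Fin p) (Fin p) ℝ) (hF_psd : ∀ j, (F j).PosSemidef)
    (f : Fin p → ℝ) (hf : ∀ j, 0 < f j)
    (η : Ω → EuclideanSpace ℝ (Fin p)) (hη_meas : Measurable η)
    (hη_sq_int : Integrable (fun ω => ‖η ω‖ ^ 2) μ)
    (hη_mean : (∫ ω, η ω ∂μ) = 0)
    (σ2 : ℝ) (hσ2 : σ2 = ∫ ω, ‖η ω‖ ^ 2 ∂μ)
    -- `lmax j` is the largest eigenvalue of `F j`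
    (lmax : Fin p → ℝ) (hlmax : ∀ j, IsGreatest (Set.range (hF_psd j).1.eigenvalues) (lmax j))
    (lam K : ℝ)
    (hlam : lam = ‖Matrix.toEuclideanCLM (𝕜 := ℝ) B‖ ^ 2 + σ2 * (⨆ j, lmax j))
    (hK : K = 1 - lam + σ2 * (⨆ j, f j)) :
    (∀ z : EuclideanSpace ℝ (Fin p),
      (∫ ω, (1 + ‖Matrix.toEuclideanCLM (𝕜 := ℝ) B.transpose z +
          Matrix.toEuclideanCLM (𝕜 := ℝ) (archSigma f F z) (η ω)‖ ^ 2) ∂μ) ≤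
        lam * (1 + ‖z‖ ^ 2) + K) ∧
    (lam < 1 → ∀ z : EuclideanSpace ℝ (Fin p), 2 * K / (1 - lam) ≤ 1 + ‖z‖ ^ 2 →
      (∫ ω, (1 + ‖Matrix.toEuclideanCLM (𝕜 := ℝ) B.transpose z +
          Matrix.toEuclideanCLM (𝕜 := ℝ) (archSigma f F z) (η ω)‖ ^ 2) ∂μ) ≤
        ((1 + lam) / 2) * (1 + ‖z‖ ^ 2)) :=
  arch_var_drift_general μ B F hF_psd f hf η hη_meas hη_sq_int hη_mean σ2 hσ2 lmax hlmax lam K hlam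
    hK
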